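/- Let $(S,\Sigma)$ be a measurable space, $\{\mu^{(n)}\}$ finite measures converging in total variation to $\mu$, $f^{(n)} \in L^1(S;\mu^{(n)})$ nonnegative functions, and $f \in L^1(S;\mu)$. Then $\liminf_{n\to\infty}\inf_{A\in\Sigma}(\int_A f^{(n)}\,d\mu^{(n)} - \int_A f\,d\mu) \ge 0$ if and only if for each $\varepsilon>0$, $\mu(\{s: f^{(n)}(s) \le f(s)-\varepsilon\}) \to 0$ as $n\to\infty$. -/

import Mathlib

/-!
Write `d n` for the total variation distance between `μs n` and `μ`. If `0 ≤ g ≤ M` is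
measurable, the layer-cake formula gives `∫ g dν ≤ ∫ g dμ + M d` as soon as `ν A ≤ μ A + d` for
every measurable `A`; so the truncations `min (F n) M` integrate almost alike against `μs n`
and `μ`.

(⇒) On `A = {F n ≤ f - ε, |f| ≤ M}` we have `F n ≤ M`, hence
`ε μ(A) ≤ ∫_A f dμ - ∫_A F n dμs n + M d n`; the right-hand side is small by hypothesis, and
`μ{|f| > M}` is small for large `M`.

(⇐) Off `D = {F n ≤ f - δ} ∪ {|f| > M}` we have `f - δ ≤ min (F n) M`, so for every `A`,
`∫_A f dμ ≤ ∫_A F n dμs n + M d n + δ μ(S) + ∫_D |f| dμ`, and the last term is small by absolute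
continuity of the integral.

Both estimates are uniform in `A`, and their error terms vanish as `δ` (or the slack `η` in the
hypothesis of (⇒)) tends to `0⁺`, `M → ∞` and then `n → ∞`. Measurability of `f` and `F n` is obtained by passing to a.e. equal versions,
which moves `μ{F n ≤ f - ε}` by at most `d n`.
-/

open MeasureTheory Filter Topology Set
open scoped ENNReal

lemma ciInf₂_le_of_forall_le {α ι : Type*} [ConditionallyCompleteLattice α] {p : ι → Prop}
    {φ : ι → α} {b : α} (hb : ∀ i, p i → b ≤ φ i) {i : ι} (hi : p i) :
    ⨅ (j) (_ : p j), φ j ≤ φ i :=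
  ciInf₂_le ⟨b, fun x hx => by
    obtain ⟨j, hj, rfl⟩ : ∃ j, ∃ hj : p j, φ j = x := by simpa using hx
    exact hb j hj⟩ i hi

lemma eventually_lt_of_le_add {κ ι : Type*} {l : Filter κ} {p : Filter ι} [p.NeBot]
    {u : κ → ℝ} {w : ι → κ → ℝ} {c : ι → ℝ} (hc : Tendsto c p (𝓝 0))
    (hw : ∀ᶠ i in p, Tendsto (w i) l (𝓝 0)) (h : ∀ᶠ i in p, ∀ᶠ k in l, u k ≤ w i k + c i)
    {a : ℝ} (ha : 0 < a) : ∀ᶠ k in l, u k < a := by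
  obtain ⟨i, hwi, hi, hci⟩ := (hw.and (h.and (hc.eventually (gt_mem_nhds (half_pos ha))))).exists
  filter_upwards [hi, hwi.eventually (gt_mem_nhds (half_pos ha))] with k hk hwk
  linarith

namespace MeasureTheory

section Integrable

variable {S : Type*} [MeasurableSpace S] {μ : Measure S}

lemma tendsto_measure_setOf_lt_atTop [IsFiniteMeasure μ] {g : S → ℝ} (hg : Measurable g) :
    Tendsto (fun M : ℝ => μ {s | M < g s}) atTop (𝓝 0) := by
  have hempty : ⋂ M : ℝ, {s | M < g s} = ∅ :=
    eq_empty_of_forall_notMem fun s hs => lt_irrefl (g s) (mem_iInter.1 hs (g s))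
  have h := tendsto_measure_iInter_atTop (μ := μ)
    (fun M => (measurableSet_lt measurable_const hg).nullMeasurableSet)
    (fun M N hMN s (hs : N < g s) => hMN.trans_lt hs) ⟨0, measure_ne_top _ _⟩
  rwa [hempty, measure_empty] at h

lemma integrable_of_nonneg_of_le [IsFiniteMeasure μ] {g : S → ℝ} (hg : Measurable g) {M : ℝ}
    (hg0 : ∀ s, 0 ≤ g s) (hgM : ∀ s, g s ≤ M) : Integrable g μ :=
  .of_bound hg.aestronglyMeasurable M
    (ae_of_all _ fun s => abs_le.2 ⟨by linarith [hg0 s, hgM s], hgM s⟩)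

lemma setIntegral_union_le_add {g : S → ℝ} (hg : Integrable g μ) (hg0 : ∀ s, 0 ≤ g s)
    (B C : Set S) : ∫ s in B ∪ C, g s ∂μ ≤ ∫ s in B, g s ∂μ + ∫ s in C, g s ∂μ := by
  rw [← integral_add_measure hg.integrableOn hg.integrableOn]
  exact integral_mono_measure (Measure.restrict_union_le B C) (ae_of_all _ hg0)
    (Integrable.add_measure (hg.integrableOn (s := B)) (hg.integrableOn (s := C)))

end Integrable

section TotalVariation

variable {S : Type*} [MeasurableSpace S] {ν μ : Measure S}

/-- `(ν A - μ A) + (μ A - ν A) = |ν A - μ A|`, as subtraction in `ℝ≥0∞` truncates at `0`. -/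
noncomputable def tvDist (ν μ : Measure S) : ℝ≥0∞ :=
  ⨆ (A : Set S) (_ : MeasurableSet A), (ν A - μ A) + (μ A - ν A)

lemma tvDist_comm (ν μ : Measure S) : tvDist ν μ = tvDist μ ν := by
  simp only [tvDist, add_comm]

lemma measure_le_add_tvDist {A : Set S} (hA : MeasurableSet A) : ν A ≤ μ A + tvDist ν μ :=
  calc ν A ≤ μ A + (ν A - μ A) := le_add_tsub
    _ ≤ μ A + tvDist ν μ := by
      gcongr
      exact le_self_add.trans
        (le_iSup₂ (f := fun A (_ : MeasurableSet A) => (ν A - μ A) + (μ A - ν A)) A hA)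

lemma measure_le_tvDist_of_measure_eq_zero {N : Set S} (hN : ν N = 0) : μ N ≤ tvDist ν μ := by
  obtain ⟨T, hNT, hT, hνT⟩ := exists_measurable_superset_of_null hN
  calc μ N ≤ μ T := measure_mono hNT
    _ ≤ ν T + tvDist μ ν := measure_le_add_tvDist hT
    _ = tvDist ν μ := by rw [hνT, zero_add, tvDist_comm]

lemma tvDist_ne_top [IsFiniteMeasure ν] [IsFiniteMeasure μ] : tvDist ν μ ≠ ∞ := by
  refine ne_top_of_le_ne_top (by finiteness : ν univ + μ univ ≠ ∞) (iSup₂_le fun A _ => ?_)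
  gcongr <;> exact tsub_le_self.trans (measure_mono (subset_univ A))

lemma isFiniteMeasure_of_tvDist_ne_top [IsFiniteMeasure ν] (h : tvDist ν μ ≠ ∞) :
    IsFiniteMeasure μ :=
  ⟨(measure_le_add_tvDist (ν := μ) (μ := ν) MeasurableSet.univ).trans_lt <| by
    rw [tvDist_comm]; exact ENNReal.add_lt_top.2 ⟨measure_lt_top _ _, h.lt_top⟩⟩

lemma tvDist_restrict_le {E : Set S} (hE : MeasurableSet E) :
    tvDist (ν.restrict E) (μ.restrict E) ≤ tvDist ν μ :=
  iSup₂_le fun A hA => by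
    rw [Measure.restrict_apply hA, Measure.restrict_apply hA]
    exact le_iSup₂ (f := fun A (_ : MeasurableSet A) => (ν A - μ A) + (μ A - ν A))
      (A ∩ E) (hA.inter hE)

lemma lintegral_le_lintegral_add_mul_tvDist {g : S → ℝ} (hg : Measurable g) {M : ℝ}
    (hg0 : ∀ s, 0 ≤ g s) (hgM : ∀ s, g s ≤ M) :
    ∫⁻ s, ENNReal.ofReal (g s) ∂ν ≤
      ∫⁻ s, ENNReal.ofReal (g s) ∂μ + ENNReal.ofReal M * tvDist ν μ := by
  have hlevel : ∀ t ∈ Ioi (0 : ℝ), ν {s | t < g s} ≤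
      μ {s | t < g s} + (Ioc 0 M).indicator (fun _ => tvDist ν μ) t := by
    intro t ht
    by_cases htM : t ≤ M
    · rw [indicator_of_mem (show t ∈ Ioc 0 M from ⟨ht, htM⟩)]
      exact measure_le_add_tvDist (measurableSet_lt measurable_const hg)
    · have : {s | t < g s} = ∅ :=
        eq_empty_of_forall_notMem fun s hs => htM ((le_of_lt hs).trans (hgM s))
      simp [this]
  rw [lintegral_eq_lintegral_meas_lt ν (ae_of_all _ hg0) hg.aemeasurable,
    lintegral_eq_lintegral_meas_lt μ (ae_of_all _ hg0) hg.aemeasurable]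
  calc ∫⁻ t in Ioi 0, ν {s | t < g s}
      ≤ ∫⁻ t in Ioi 0, (μ {s | t < g s} + (Ioc 0 M).indicator (fun _ => tvDist ν μ) t) :=
        setLIntegral_mono' measurableSet_Ioi hlevel
    _ = (∫⁻ t in Ioi 0, μ {s | t < g s}) + ENNReal.ofReal M * tvDist ν μ := by
      rw [lintegral_add_right _ (measurable_const.indicator measurableSet_Ioc),
        lintegral_indicator_const measurableSet_Ioc, Measure.restrict_apply measurableSet_Ioc,
        inter_eq_left.2 Ioc_subset_Ioi_self, Real.volume_Ioc, sub_zero, mul_comm]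

lemma integral_le_integral_add_mul_tvDist [IsFiniteMeasure ν] [IsFiniteMeasure μ] {g : S → ℝ}
    (hg : Measurable g) {M : ℝ} (hM : 0 ≤ M) (hg0 : ∀ s, 0 ≤ g s) (hgM : ∀ s, g s ≤ M) :
    ∫ s, g s ∂ν ≤ ∫ s, g s ∂μ + M * (tvDist ν μ).toReal := by
  have hlint := lintegral_le_lintegral_add_mul_tvDist (ν := ν) (μ := μ) hg hg0 hgM
  have hMd : 0 ≤ M * (tvDist ν μ).toReal := mul_nonneg hM ENNReal.toReal_nonneg
  rw [← ofReal_integral_eq_lintegral_ofReal (integrable_of_nonneg_of_le hg hg0 hgM)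
      (ae_of_all _ hg0),
    ← ofReal_integral_eq_lintegral_ofReal (integrable_of_nonneg_of_le hg hg0 hgM)
      (ae_of_all _ hg0),
    ← ENNReal.ofReal_toReal tvDist_ne_top, ← ENNReal.ofReal_mul hM,
    ← ENNReal.ofReal_add (integral_nonneg hg0) hMd] at hlint
  exact (ENNReal.ofReal_le_ofReal_iff (add_nonneg (integral_nonneg hg0) hMd)).1 hlint

lemma setIntegral_min_le_add_mul_tvDist [IsFiniteMeasure ν] [IsFiniteMeasure μ] {F : S → ℝ}
    (hF : Measurable F) (hF0 : ∀ s, 0 ≤ F s) {M : ℝ} (hM : 0 ≤ M) {E : Set S}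
    (hE : MeasurableSet E) :
    ∫ s in E, min (F s) M ∂ν ≤ ∫ s in E, min (F s) M ∂μ + M * (tvDist ν μ).toReal := by
  refine (integral_le_integral_add_mul_tvDist (ν := ν.restrict E) (μ := μ.restrict E)
    (hF.min measurable_const) hM (fun s => le_min (hF0 s) hM) fun s => min_le_right _ _).trans ?_
  gcongr
  exacts [tvDist_ne_top, tvDist_restrict_le hE]

lemma measure_setOf_le_sub_le_add_tvDist {F G f g : S → ℝ} (hFG : F =ᵐ[ν] G) (hfg : f =ᵐ[μ] g)
    (ε : ℝ) : μ {s | F s ≤ f s - ε} ≤ μ {s | G s ≤ g s - ε} + tvDist ν μ :=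
  calc μ {s | F s ≤ f s - ε} = μ {s | F s ≤ g s - ε} :=
        measure_congr <| hfg.mono fun s hs => by
          change (F s ≤ f s - ε) = (F s ≤ g s - ε)
          rw [hs]
    _ ≤ μ ({s | G s ≤ g s - ε} ∪ {s | F s ≠ G s}) := measure_mono fun s hs => by
        by_cases h : F s = G s
        · exact Or.inl (show G s ≤ g s - ε from h ▸ hs)
        · exact Or.inr h
    _ ≤ μ {s | G s ≤ g s - ε} + μ {s | F s ≠ G s} := measure_union_le _ _
    _ ≤ μ {s | G s ≤ g s - ε} + tvDist ν μ := by
        gcongr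
        exact measure_le_tvDist_of_measure_eq_zero (ae_iff.1 hFG)

lemma tendsto_measure_setOf_le_sub_congr {ι : Type*} {l : Filter ι} {νs : ι → Measure S}
    (htv : Tendsto (fun i => tvDist (νs i) μ) l (𝓝 0)) {F G : ι → S → ℝ} {f g : S → ℝ}
    (hFG : ∀ i, F i =ᵐ[νs i] G i) (hfg : f =ᵐ[μ] g) (ε : ℝ) :
    Tendsto (fun i => μ {s | F i s ≤ f s - ε}) l (𝓝 0) ↔
      Tendsto (fun i => μ {s | G i s ≤ g s - ε}) l (𝓝 0) := by
  have squeeze {u v : ι → ℝ≥0∞} (hle : ∀ i, u i ≤ v i + tvDist (νs i) μ)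
      (hv : Tendsto v l (𝓝 0)) : Tendsto u l (𝓝 0) :=
    tendsto_of_tendsto_of_tendsto_of_le_of_le tendsto_const_nhds (by simpa using hv.add htv)
      (fun _ => zero_le) hle
  exact ⟨squeeze fun i => measure_setOf_le_sub_le_add_tvDist (hFG i).symm hfg.symm ε,
    squeeze fun i => measure_setOf_le_sub_le_add_tvDist (hFG i) hfg ε⟩

end TotalVariation

section SetIntegral

variable {S : Type*} [MeasurableSpace S] {ν μ : Measure S} [IsFiniteMeasure ν] [IsFiniteMeasure μ]

lemma mul_measureReal_le_setIntegral_sub_add {f F : S → ℝ} (hf : Integrable f μ)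
    (hF : Measurable F) (hF0 : ∀ s, 0 ≤ F s) {ε M : ℝ} (hM : 0 ≤ M) {A : Set S}
    (hA : MeasurableSet A) (hFf : ∀ s ∈ A, F s ≤ f s - ε) (hFM : ∀ s ∈ A, F s ≤ M) :
    ε * μ.real A ≤ ∫ s in A, f s ∂μ - ∫ s in A, F s ∂ν + M * (tvDist ν μ).toReal := by
  have hmin : ∀ s ∈ A, min (F s) M = F s := fun s hs => min_eq_left (hFM s hs)
  have hint : Integrable (fun s => min (F s) M) μ := integrable_of_nonneg_of_le
    (hF.min measurable_const) (fun s => le_min (hF0 s) hM) fun s => min_le_right _ _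
  have hupper : ∫ s in A, min (F s) M ∂μ ≤ ∫ s in A, f s ∂μ - ε * μ.real A :=
    calc ∫ s in A, min (F s) M ∂μ ≤ ∫ s in A, (f s - ε) ∂μ :=
          setIntegral_mono_on hint.integrableOn (hf.sub (integrable_const ε)).integrableOn hA
            fun s hs => (hmin s hs).symm ▸ hFf s hs
      _ = ∫ s in A, f s ∂μ - ε * μ.real A := by
          rw [integral_sub hf.integrableOn (integrable_const ε), setIntegral_const, smul_eq_mul,
            mul_comm]
  have hcompare := setIntegral_min_le_add_mul_tvDist (ν := ν) (μ := μ) hF hF0 hM hA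
  rw [setIntegral_congr_fun hA hmin] at hcompare
  linarith

lemma setIntegral_le_setIntegral_add_of_sub_le_min {f F : S → ℝ} (hf : Integrable f μ)
    (hF : Integrable F ν) (hFm : Measurable F) (hF0 : ∀ s, 0 ≤ F s) {δ M : ℝ} (hδ : 0 ≤ δ)
    (hM : 0 ≤ M) {A D : Set S} (hA : MeasurableSet A) (hD : MeasurableSet D)
    (hfF : ∀ s ∉ D, f s - δ ≤ min (F s) M) :
    ∫ s in A, f s ∂μ ≤ ∫ s in A, F s ∂ν + M * (tvDist ν μ).toReal + δ * μ.real univ +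
      ∫ s in D, ‖f s‖ ∂μ := by
  have hint : Integrable (fun s => min (F s) M) μ := integrable_of_nonneg_of_le
    (hFm.min measurable_const) (fun s => le_min (hF0 s) hM) fun s => min_le_right _ _
  have hbad : ∫ s in A ∩ D, f s ∂μ ≤ ∫ s in D, ‖f s‖ ∂μ :=
    calc ∫ s in A ∩ D, f s ∂μ ≤ ∫ s in A ∩ D, ‖f s‖ ∂μ :=
          integral_mono hf.integrableOn hf.norm.integrableOn fun s => Real.le_norm_self _
      _ ≤ ∫ s in D, ‖f s‖ ∂μ := setIntegral_mono_set hf.norm.integrableOn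
          (ae_of_all _ fun s => norm_nonneg _) inter_subset_right.eventuallyLE
  have hgood : ∫ s in A \ D, f s ∂μ ≤
      ∫ s in A, F s ∂ν + M * (tvDist ν μ).toReal + δ * μ.real univ :=
    calc ∫ s in A \ D, f s ∂μ ≤ ∫ s in A \ D, (min (F s) M + δ) ∂μ :=
          setIntegral_mono_on hf.integrableOn (hint.add (integrable_const δ)).integrableOn
            (hA.diff hD) fun s hs => by linarith [hfF s hs.2]
      _ = ∫ s in A \ D, min (F s) M ∂μ + δ * μ.real (A \ D) := by
          rw [integral_add hint.integrableOn (integrable_const δ), setIntegral_const, smul_eq_mul,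
            mul_comm]
      _ ≤ (∫ s in A \ D, min (F s) M ∂ν + M * (tvDist ν μ).toReal) + δ * μ.real univ := by
          gcongr
          · rw [tvDist_comm]
            exact setIntegral_min_le_add_mul_tvDist hFm hF0 hM (hA.diff hD)
          · exact measure_ne_top _ _
          · exact subset_univ _
      _ ≤ ∫ s in A, F s ∂ν + M * (tvDist ν μ).toReal + δ * μ.real univ := by
          gcongr
          calc ∫ s in A \ D, min (F s) M ∂ν ≤ ∫ s in A \ D, F s ∂ν :=
                integral_mono_of_nonneg (ae_of_all _ fun s => le_min (hF0 s) hM)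
                  hF.integrableOn (ae_of_all _ fun s => min_le_left _ _)
            _ ≤ ∫ s in A, F s ∂ν := setIntegral_mono_set hF.integrableOn (ae_of_all _ hF0)
                sdiff_subset.eventuallyLE
  rw [← integral_inter_add_sdiff hD hf.integrableOn]
  linarith

end SetIntegral

section UniformFatou

variable {S : Type*} [MeasurableSpace S] {μs : ℕ → Measure S} {μ : Measure S}
  [∀ n, IsFiniteMeasure (μs n)] [IsFiniteMeasure μ] {f : S → ℝ} {F : ℕ → S → ℝ}

theorem tendsto_measure_setOf_le_sub_of_eventually_le_iInf
    (htv : Tendsto (fun n => tvDist (μs n) μ) atTop (𝓝 0)) (hfm : Measurable f)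
    (hf : Integrable f μ) (hFm : ∀ n, Measurable (F n)) (hF0 : ∀ n s, 0 ≤ F n s)
    (h : ∀ η : ℝ, 0 < η → ∀ᶠ n in atTop, -η ≤ ⨅ (A : Set S) (_ : MeasurableSet A),
      (∫ s in A, F n s ∂(μs n) - ∫ s in A, f s ∂μ))
    {ε : ℝ} (hε : 0 < ε) : Tendsto (fun n => μ {s | F n s ≤ f s - ε}) atTop (𝓝 0) := by
  have hd : Tendsto (fun n => (tvDist (μs n) μ).toReal) atTop (𝓝 0) :=
    (ENNReal.tendsto_toReal_zero_iff fun n => tvDist_ne_top).2 htv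
  have htail : Tendsto (fun M : ℝ => μ.real {s | M < ‖f s‖}) atTop (𝓝 0) :=
    (ENNReal.tendsto_toReal_zero_iff fun M => measure_ne_top _ _).2
      (tendsto_measure_setOf_lt_atTop hfm.norm)
  have hlow : ∀ n A, MeasurableSet A →
      -∫ s, ‖f s‖ ∂μ ≤ ∫ s in A, F n s ∂(μs n) - ∫ s in A, f s ∂μ := by
    intro n A hA
    have hFA : 0 ≤ ∫ s in A, F n s ∂(μs n) := setIntegral_nonneg hA fun s _ => hF0 n s
    have hfA : ∫ s in A, f s ∂μ ≤ ∫ s, ‖f s‖ ∂μ :=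
      (Real.le_norm_self _).trans (norm_integral_le_integral_norm _) |>.trans
        (setIntegral_le_integral hf.norm (ae_of_all _ fun s => norm_nonneg _))
    linarith
  have hbound : ∀ᶠ i : ℝ × ℝ in 𝓝[>] 0 ×ˢ atTop, ∀ᶠ n in atTop,
      ε * μ.real {s | F n s ≤ f s - ε} ≤
        i.2 * (tvDist (μs n) μ).toReal + (i.1 + ε * μ.real {s | i.2 < ‖f s‖}) := by
    filter_upwards [eventually_mem_nhdsWithin.prod_mk (eventually_ge_atTop 0)] with
      ⟨η, M⟩ ⟨hη, hM⟩
    filter_upwards [h η hη] with n hn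
    set A := {s | F n s ≤ f s - ε} ∩ {s | ‖f s‖ ≤ M}
    have hA : MeasurableSet A := (measurableSet_le (hFm n) (hfm.sub_const ε)).inter
      (measurableSet_le hfm.norm measurable_const)
    have hAε := mul_measureReal_le_setIntegral_sub_add (ν := μs n) hf (hFm n) (hF0 n) hM hA
      (fun s hs => hs.1) fun s hs => by linarith [hs.1.out, (Real.le_norm_self (f s)).trans hs.2]
    have hηA := hn.trans (ciInf₂_le_of_forall_le (hlow n) hA)
    have hsplit : μ.real {s | F n s ≤ f s - ε} ≤ μ.real A + μ.real {s | M < ‖f s‖} :=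
      (measureReal_mono fun s hs => (em (‖f s‖ ≤ M)).imp (fun hM => ⟨hs, hM⟩) not_le.1).trans
        (measureReal_union_le _ _)
    have := mul_le_mul_of_nonneg_left hsplit hε.le
    linarith
  have hc : Tendsto (fun i : ℝ × ℝ => i.1 + ε * μ.real {s | i.2 < ‖f s‖})
      (𝓝[>] 0 ×ˢ atTop) (𝓝 0) := by
    simpa using ((tendsto_id.mono_left nhdsWithin_le_nhds).comp tendsto_fst).add
      ((htail.comp tendsto_snd).const_mul ε)
  have hw : ∀ᶠ i : ℝ × ℝ in 𝓝[>] 0 ×ˢ atTop,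
      Tendsto (fun n => i.2 * (tvDist (μs n) μ).toReal) atTop (𝓝 0) :=
    Eventually.of_forall fun i => by simpa using hd.const_mul i.2
  rw [← ENNReal.tendsto_toReal_zero_iff fun n => measure_ne_top _ _]
  refine tendsto_order.2 ⟨fun a ha => Eventually.of_forall fun n => ha.trans_le
    ENNReal.toReal_nonneg, fun a ha => ?_⟩
  filter_upwards [eventually_lt_of_le_add hc hw hbound (mul_pos hε ha)] with n hn
  exact lt_of_mul_lt_mul_left hn hε.le

theorem eventually_le_iInf_of_tendsto_measure_setOf_le_sub
    (htv : Tendsto (fun n => tvDist (μs n) μ) atTop (𝓝 0)) (hfm : Measurable f)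
    (hf : Integrable f μ) (hFm : ∀ n, Measurable (F n)) (hF : ∀ n, Integrable (F n) (μs n))
    (hF0 : ∀ n s, 0 ≤ F n s)
    (h : ∀ δ : ℝ, 0 < δ → Tendsto (fun n => μ {s | F n s ≤ f s - δ}) atTop (𝓝 0))
    {ε : ℝ} (hε : 0 < ε) : ∀ᶠ n in atTop, -ε ≤ ⨅ (A : Set S) (_ : MeasurableSet A),
      (∫ s in A, F n s ∂(μs n) - ∫ s in A, f s ∂μ) := by
  set w : ℝ × ℝ → ℕ → ℝ := fun i n =>
    i.2 * (tvDist (μs n) μ).toReal + ∫ s in {s | F n s ≤ f s - i.1}, ‖f s‖ ∂μ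
  set c : ℝ × ℝ → ℝ := fun i => i.1 * μ.real univ + ∫ s in {s | i.2 < ‖f s‖}, ‖f s‖ ∂μ
  have hbound : ∀ᶠ i : ℝ × ℝ in 𝓝[>] 0 ×ˢ atTop, ∀ᶠ n in atTop,
      -⨅ (A : Set S) (_ : MeasurableSet A), (∫ s in A, F n s ∂(μs n) - ∫ s in A, f s ∂μ) ≤
        w i n + c i := by
    filter_upwards [eventually_mem_nhdsWithin.prod_mk (eventually_ge_atTop 0)] with
      ⟨δ, M⟩ ⟨(hδ : 0 < δ), (hM : 0 ≤ M)⟩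
    refine Eventually.of_forall fun n => ?_
    have hwc : 0 ≤ w (δ, M) n + c (δ, M) := by
      have : 0 ≤ ∫ s in {s | F n s ≤ f s - δ}, ‖f s‖ ∂μ := integral_nonneg fun s => norm_nonneg _
      have : 0 ≤ ∫ s in {s | M < ‖f s‖}, ‖f s‖ ∂μ := integral_nonneg fun s => norm_nonneg _
      have : 0 ≤ δ * μ.real univ := mul_nonneg hδ.le measureReal_nonneg
      have : 0 ≤ M * (tvDist (μs n) μ).toReal := mul_nonneg hM ENNReal.toReal_nonneg
      simp only [w, c]
      linarith
    refine neg_le.1 (Real.le_iInf (fun A => Real.le_iInf (fun hA => ?_) (by linarith))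
      (by linarith))
    have hB : MeasurableSet {s | F n s ≤ f s - δ} :=
      measurableSet_le (hFm n) (hfm.sub_const δ)
    have hC : MeasurableSet {s | M < ‖f s‖} := measurableSet_lt measurable_const hfm.norm
    have hA' := setIntegral_le_setIntegral_add_of_sub_le_min hf (hF n) (hFm n) (hF0 n) hδ.le hM
      hA (hB.union hC) fun s hs => by
        simp only [mem_union, mem_ofPred_eq, not_or, not_le, not_lt] at hs
        exact le_min hs.1.le (by linarith [Real.le_norm_self (f s)])
    have hunion := setIntegral_union_le_add hf.norm (fun s => norm_nonneg (f s))
      {s | F n s ≤ f s - δ} {s | M < ‖f s‖}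
    simp only [w, c]
    linarith
  have hw : ∀ᶠ i : ℝ × ℝ in 𝓝[>] 0 ×ˢ atTop, Tendsto (w i) atTop (𝓝 0) := by
    filter_upwards [eventually_mem_nhdsWithin.prod_inl atTop] with ⟨δ, M⟩ hδ
    simpa [w] using ((ENNReal.tendsto_toReal_zero_iff fun n => tvDist_ne_top).2 htv).const_mul M
      |>.add (hf.norm.tendsto_setIntegral_nhds_zero (h δ hδ))
  have hc : Tendsto c (𝓝[>] 0 ×ˢ atTop) (𝓝 0) := by
    have hid : Tendsto (fun δ : ℝ => δ) (𝓝[>] 0) (𝓝 0) := tendsto_id.mono_left nhdsWithin_le_nhds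
    simpa [c] using ((hid.comp tendsto_fst).mul_const (μ.real univ)).add
      ((hf.norm.tendsto_setIntegral_nhds_zero (tendsto_measure_setOf_lt_atTop hfm.norm)).comp
        tendsto_snd)
  filter_upwards [eventually_lt_of_le_add hc hw hbound hε] with n hn
  linarith

end UniformFatou

end MeasureTheory

/-- Uniform Fatou's Lemma for nonnegative functions and variable measures. -/
theorem uniform_fatou_stmt6 {S : Type*} [MeasurableSpace S]
    (μs : ℕ → Measure S) (μ : Measure S) [∀ n, IsFiniteMeasure (μs n)]
    (htv : Tendsto (fun n => ⨆ (A : Set S) (_ : MeasurableSet A),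
      (μs n A - μ A) + (μ A - μs n A)) atTop (𝓝 0))
    (f : S → ℝ) (F : ℕ → S → ℝ)
    (hf : Integrable f μ) (hF : ∀ n, Integrable (F n) (μs n))
    (hpos : ∀ n s, 0 ≤ F n s) :
    (∀ ε : ℝ, 0 < ε → ∀ᶠ n in atTop,
      -ε ≤ ⨅ (A : Set S) (_ : MeasurableSet A),
        (∫ s in A, F n s ∂(μs n) - ∫ s in A, f s ∂μ)) ↔
    (∀ ε : ℝ, 0 < ε →
      Tendsto (fun n => μ {s | F n s ≤ f s - ε}) atTop (𝓝 0)) := by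
  have htv' : Tendsto (fun n => tvDist (μs n) μ) atTop (𝓝 0) := htv
  have : IsFiniteMeasure μ := by
    obtain ⟨n, hn⟩ := (htv'.eventually_ne ENNReal.zero_ne_top).exists
    exact isFiniteMeasure_of_tvDist_ne_top hn
  obtain ⟨g, hgm, hfg⟩ := hf.aemeasurable
  choose G hGm hG0 hFG using fun n =>
    (hF n).aemeasurable.exists_measurable_nonneg (ae_of_all _ (hpos n))
  have hlower : ∀ n, ⨅ (A : Set S) (_ : MeasurableSet A),
      (∫ s in A, F n s ∂(μs n) - ∫ s in A, f s ∂μ) = ⨅ (A : Set S) (_ : MeasurableSet A),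
      (∫ s in A, G n s ∂(μs n) - ∫ s in A, g s ∂μ) := fun n =>
    iInf_congr fun A => iInf_congr fun _ => by
      rw [integral_congr_ae (ae_restrict_of_ae (hFG n)),
        integral_congr_ae (ae_restrict_of_ae hfg)]
  simp only [hlower, tendsto_measure_setOf_le_sub_congr htv' hFG hfg]
  exact ⟨fun h ε hε => tendsto_measure_setOf_le_sub_of_eventually_le_iInf htv' hgm
      (hf.congr hfg) hGm hG0 h hε,
    fun h ε hε => eventually_le_iInf_of_tendsto_measure_setOf_le_sub htv' hgm (hf.congr hfg) hGm
      (fun n => (hF n).congr (hFG n)) hG0 h hε⟩
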